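/- arXiv:2003.12548 — 2 statements merged into one kernel-verified Lean document; each statement's English description precedes it below -/
import Mathlib

section
/- Let Π be a 2×2 real positive definite matrix, z ∈ ℝ², and W > 0. Then det(Φ(Π, z)) = det(Π) · W/(W + zᵀ Π z), where Φ(Π, z) := Π − (Π z zᵀ Π)/(W + zᵀ Π z). Consequently det(Φ(Π, z)) ≤ det(Π), with strict inequality if and only if z ≠ 0. -/
open Matrix

/-- The LSE covariance update map Φ(Π, z) = Π − (Π z zᵀ Π)/(W + zᵀ Π z). -/
noncomputable def covUpdate (W : ℝ) (Pm : Matrix (Fin 2) (Fin 2) ℝ) (z : Fin 2 → ℝ) :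
    Matrix (Fin 2) (Fin 2) ℝ :=
  Pm - (W + z ⬝ᵥ Pm.mulVec z)⁻¹ • (Pm * vecMulVec z z * Pm)

/-!
Since `Π z zᵀ Π = Π · z (Πᵀ z)ᵀ`, the update factors as `Φ(Π, z) = Π (1 - c · z (Πᵀ z)ᵀ)` with
`c = (W + zᵀ Π z)⁻¹`, and the matrix determinant lemma gives
`det Φ(Π, z) = det Π · (1 - c · zᵀ Π z) = det Π · W / (W + zᵀ Π z)`.
For positive definite `Π` the quadratic form `zᵀ Π z` is nonnegative and vanishes only at `z = 0`,
so the factor `W / (W + zᵀ Π z)` lies in `(0, 1]` and equals `1` exactly when `z = 0`.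
-/

namespace Matrix

variable {n α : Type*} [Fintype n] [DecidableEq n] [CommRing α]

theorem det_one_add_vecMulVec (u v : n → α) : det (1 + vecMulVec u v) = 1 + v ⬝ᵥ u := by
  rw [vecMulVec_eq Unit, det_one_add_replicateCol_mul_replicateRow]

theorem det_sub_smul_mul_vecMulVec_mul (P : Matrix n n α) (z : n → α) (c : α) :
    det (P - c • (P * vecMulVec z z * P)) = det P * (1 - c * (z ⬝ᵥ P *ᵥ z)) := by
  have factor : P - c • (P * vecMulVec z z * P) = P * (1 + vecMulVec (-c • z) (z ᵥ* P)) := by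
    rw [Matrix.mul_add, Matrix.mul_one, Matrix.mul_assoc, vecMulVec_mul, mul_vecMulVec,
      mul_vecMulVec, mulVec_smul, smul_vecMulVec, neg_smul, sub_eq_add_neg]
  rw [factor, det_mul, det_one_add_vecMulVec, dotProduct_smul, ← dotProduct_mulVec, smul_eq_mul,
    neg_mul, ← sub_eq_add_neg]

end Matrix

theorem covUpdate_det_eq (W : ℝ) (Pm : Matrix (Fin 2) (Fin 2) ℝ) (z : Fin 2 → ℝ)
    (hs : W + z ⬝ᵥ Pm *ᵥ z ≠ 0) :
    (covUpdate W Pm z).det = Pm.det * (W / (W + z ⬝ᵥ Pm *ᵥ z)) := by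
  rw [covUpdate, det_sub_smul_mul_vecMulVec_mul]
  congr 1
  field_simp
  ring

/-- det Φ(Π,z) = det Π · W/(W + zᵀΠz); hence det Φ(Π,z) ≤ det Π, with strict
inequality iff z ≠ 0. -/
theorem covUpdate_det
    (Pm : Matrix (Fin 2) (Fin 2) ℝ) (hPm : Pm.PosDef)
    (z : Fin 2 → ℝ) (W : ℝ) (hW : 0 < W) :
    (covUpdate W Pm z).det = Pm.det * (W / (W + z ⬝ᵥ Pm.mulVec z)) ∧
      (covUpdate W Pm z).det ≤ Pm.det ∧
      ((covUpdate W Pm z).det < Pm.det ↔ z ≠ 0) := by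
  set q := z ⬝ᵥ Pm *ᵥ z
  have hq_nonneg : 0 ≤ q := hPm.posSemidef.re_dotProduct_nonneg z
  have hq_pos : 0 < q ↔ z ≠ 0 :=
    ⟨fun hq hz => by simp [q, hz] at hq, hPm.re_dotProduct_pos⟩
  have hs : 0 < W + q := by linarith
  have hdet := covUpdate_det_eq W Pm z hs.ne'
  have hPm_det : 0 < Pm.det := hPm.det_pos
  refine ⟨hdet, ?_, ?_⟩
  · rw [hdet]
    exact mul_le_of_le_one_right hPm_det.le ((div_le_one hs).2 (by linarith))
  · rw [hdet, mul_lt_iff_lt_one_right hPm_det, div_lt_one hs, ← hq_pos]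
    exact lt_add_iff_pos_right W
end

section
/- (Expectation form of Corollary 1.) Let (Ω, ℱ, ℙ) be a probability space, Π₀ a 2×2 real positive definite matrix, W > 0, T ≥ 1, and let z₀, …, z_{T−1} : Ω → ℝ² be random vectors. Define pathwise Π_{t+1}(ω) := Π_t(ω) − (Π_t(ω) z_t(ω) z_t(ω)ᵀ Π_t(ω))/(W + z_t(ω)ᵀ Π_t(ω) z_t(ω)), with Π₀ constant. Assume each z_tᵀ Π_t z_t and log det Π_T are integrable and everything is measurable. Then E[(1/2)·log det Π₀ − (1/2)·log det Π_T] ≤ T·(1/2)·log(1 + (1/(T·W))·Σ_{t=0}^{T−1} E[z_tᵀ Π_t z_t]). -/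
open MeasureTheory Matrix

/-- Matrices inherit the product measurable structure (defeq to `Fin 2 → Fin 2 → ℝ`). -/
instance : MeasurableSpace (Matrix (Fin 2) (Fin 2) ℝ) :=
  (inferInstance : MeasurableSpace (Fin 2 → Fin 2 → ℝ))

/-!
Since `Π_{t+1}⁻¹ = Π_t⁻¹ + W⁻¹ z_t z_tᵀ`, every `Π_t` stays positive definite and
`det Π_{t+1} = det Π_t · W / (W + z_tᵀ Π_t z_t)`. Telescoping, the information gain
`½ log det Π₀ − ½ log det Π_T` is pathwise the sum of the capacities `C(z_tᵀ Π_t z_t)`.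
As `C` is concave on `[0, ∞)`, Jensen's inequality over `Ω` bounds `E[C(z_tᵀ Π_t z_t)]` by
`C(E[z_tᵀ Π_t z_t])`, and Jensen's inequality over the `T` time steps bounds the sum of those by
`T · C` of their average.
-/

open Set

noncomputable def awgnCapacity (W P : ℝ) : ℝ := 1 / 2 * Real.log (1 + P / W)

section Capacity

variable {W : ℝ}

lemma awgnCapacity_nonneg (hW : 0 < W) {x : ℝ} (hx : 0 ≤ x) : 0 ≤ awgnCapacity W x := by
  unfold awgnCapacity
  have := Real.log_nonneg (le_add_of_nonneg_right (div_nonneg hx hW.le))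
  positivity

lemma awgnCapacity_le (hW : 0 < W) {x : ℝ} (hx : 0 ≤ x) : awgnCapacity W x ≤ x / (2 * W) := by
  have := Real.log_le_sub_one_of_pos (by positivity : 0 < 1 + x / W)
  rw [awgnCapacity, div_mul_eq_div_div_swap]
  linarith

lemma measurable_awgnCapacity : Measurable (awgnCapacity W) := by
  unfold awgnCapacity
  fun_prop

lemma continuousOn_awgnCapacity (hW : 0 < W) : ContinuousOn (awgnCapacity W) (Ici 0) := by
  unfold awgnCapacity
  refine (ContinuousOn.log (by fun_prop) fun x hx => ?_).const_smul (1 / 2 : ℝ)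
  have : (0 : ℝ) ≤ x := hx
  positivity

lemma concaveOn_awgnCapacity (hW : 0 < W) : ConcaveOn ℝ (Ici 0) (awgnCapacity W) := by
  refine ⟨convex_Ici 0, fun x hx y hy a b ha hb hab => ?_⟩
  have hlog := strictConcaveOn_log_Ioi.concaveOn.2 (x := 1 + x / W) (y := 1 + y / W)
    (by simp only [mem_Ioi]; have : (0 : ℝ) ≤ x := hx; positivity)
    (by simp only [mem_Ioi]; have : (0 : ℝ) ≤ y := hy; positivity) ha hb hab
  have harg : a * (1 + x / W) + b * (1 + y / W) = 1 + (a * x + b * y) / W := by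
    linear_combination hab
  simp only [awgnCapacity, smul_eq_mul, harg] at hlog ⊢
  linarith

variable {Ω : Type*} [MeasurableSpace Ω] {μ : Measure Ω} {f : Ω → ℝ}

lemma MeasureTheory.Integrable.awgnCapacity_comp (hW : 0 < W) (hf : Integrable f μ)
    (hf0 : 0 ≤ᵐ[μ] f) : Integrable (fun ω => awgnCapacity W (f ω)) μ := by
  refine (hf.div_const (2 * W)).mono' (measurable_awgnCapacity.comp_aemeasurable
    hf.aemeasurable).aestronglyMeasurable ?_
  filter_upwards [hf0] with ω hω
  rw [Real.norm_of_nonneg (awgnCapacity_nonneg hW hω)]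
  exact awgnCapacity_le hW hω

lemma integral_awgnCapacity_le [IsProbabilityMeasure μ] (hW : 0 < W) (hf : Integrable f μ)
    (hf0 : 0 ≤ᵐ[μ] f) : ∫ ω, awgnCapacity W (f ω) ∂μ ≤ awgnCapacity W (∫ ω, f ω ∂μ) :=
  (concaveOn_awgnCapacity hW).le_map_integral (continuousOn_awgnCapacity hW) isClosed_Ici hf0 hf
    (hf.awgnCapacity_comp hW hf0)

end Capacity

lemma ConcaveOn.sum_le_card_mul_map_average {E ι : Type*} [AddCommGroup E] [Module ℝ E]
    {s : Set E} {g : E → ℝ} {t : Finset ι} {p : ι → E} (hg : ConcaveOn ℝ s g)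
    (hp : ∀ i ∈ t, p i ∈ s) :
    ∑ i ∈ t, g (p i) ≤ t.card * g ((t.card : ℝ)⁻¹ • ∑ i ∈ t, p i) := by
  rcases t.eq_empty_or_nonempty with rfl | ht
  · simp
  have hcard : (0 : ℝ) < t.card := by exact_mod_cast ht.card_pos
  have := hg.le_map_sum (w := fun _ => (t.card : ℝ)⁻¹) (fun _ _ => by positivity)
    (by simp [hcard.ne']) hp
  rw [← Finset.smul_sum, ← Finset.smul_sum, smul_eq_mul] at this
  rwa [← inv_mul_le_iff₀ hcard]

lemma Matrix.PosDef.dotProduct_mulVec_self_nonneg {n : Type*} [Fintype n] {P : Matrix n n ℝ}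
    (hP : P.PosDef) (z : n → ℝ) : 0 ≤ z ⬝ᵥ P *ᵥ z := by
  simpa using hP.posSemidef.dotProduct_mulVec_nonneg z

lemma vecMulVec_mul_mul_vecMulVec {n R : Type*} [Fintype n] [CommSemiring R] (M : Matrix n n R)
    (z : n → R) :
    vecMulVec z z * M * vecMulVec z z = (z ⬝ᵥ M *ᵥ z) • vecMulVec z z := by
  rw [Matrix.mul_assoc, mul_vecMulVec, vecMulVec_mul_vecMulVec, vecMulVec_smul]

section CovUpdate

variable {W : ℝ} {P : Matrix (Fin 2) (Fin 2) ℝ} {z : Fin 2 → ℝ}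

lemma covUpdate_mul_inv_add (hW : W ≠ 0) (hq : W + z ⬝ᵥ P *ᵥ z ≠ 0) (hP : IsUnit P.det) :
    covUpdate W P z * (P⁻¹ + W⁻¹ • vecMulVec z z) = 1 := by
  set q := z ⬝ᵥ P *ᵥ z
  have hZPZ : vecMulVec z z * (P * vecMulVec z z) = q • vecMulVec z z := by
    rw [← Matrix.mul_assoc, vecMulVec_mul_mul_vecMulVec]
  calc covUpdate W P z * (P⁻¹ + W⁻¹ • vecMulVec z z)
      = 1 + (W⁻¹ - (W + q)⁻¹ - (W + q)⁻¹ * W⁻¹ * q) • (P * vecMulVec z z) := by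
        simp only [covUpdate, Matrix.sub_mul, Matrix.mul_add, Matrix.smul_mul, Matrix.mul_smul,
          Matrix.mul_assoc, mul_nonsing_inv P hP, Matrix.mul_one, hZPZ]
        module
    _ = 1 := by
        rw [show W⁻¹ - (W + q)⁻¹ - (W + q)⁻¹ * W⁻¹ * q = 0 by field_simp; ring, zero_smul,
          add_zero]

lemma covUpdate_eq_inv (hW : 0 < W) (hP : P.PosDef) :
    covUpdate W P z = (P⁻¹ + W⁻¹ • vecMulVec z z)⁻¹ := by
  have hq : W + z ⬝ᵥ P *ᵥ z ≠ 0 := by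
    have := hP.dotProduct_mulVec_self_nonneg z
    positivity
  exact (inv_eq_left_inv (covUpdate_mul_inv_add hW.ne' hq hP.det_pos.ne'.isUnit)).symm

lemma Matrix.PosDef.covUpdate (hW : 0 < W) (hP : P.PosDef) : (covUpdate W P z).PosDef := by
  have hZ : (vecMulVec z z).PosSemidef := by simpa using posSemidef_vecMulVec_self_star z
  rw [covUpdate_eq_inv hW hP]
  exact (hP.inv.add_posSemidef (hZ.smul (inv_nonneg.2 hW.le))).inv

lemma det_covUpdate (hq : W + z ⬝ᵥ P *ᵥ z ≠ 0) :
    (covUpdate W P z).det = P.det * W / (W + z ⬝ᵥ P *ᵥ z) := by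
  rw [covUpdate]
  generalize hc : W + z ⬝ᵥ P *ᵥ z = c at hq ⊢
  simp only [det_fin_two, Matrix.sub_apply, Matrix.smul_apply, smul_eq_mul, mul_apply,
    vecMulVec_apply, Fin.sum_univ_two]
  field_simp
  subst hc
  simp only [mulVec, dotProduct, Fin.sum_univ_two]
  ring

lemma log_det_covUpdate (hW : 0 < W) (hP : P.PosDef) :
    Real.log (covUpdate W P z).det = Real.log P.det - Real.log (1 + z ⬝ᵥ P *ᵥ z / W) := by
  have hq : 0 < W + z ⬝ᵥ P *ᵥ z := by
    have := hP.dotProduct_mulVec_self_nonneg z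
    positivity
  have hdet := hP.det_pos
  rw [det_covUpdate hq.ne', one_add_div hW.ne', Real.log_div (by positivity) hq.ne',
    Real.log_mul hdet.ne' hW.ne', Real.log_div hq.ne' hW.ne']
  ring

end CovUpdate

section Trajectory

variable {W : ℝ} {P : ℕ → Matrix (Fin 2) (Fin 2) ℝ} {z : ℕ → Fin 2 → ℝ}

lemma posDef_of_covUpdate_rec (hW : 0 < W) (hP0 : (P 0).PosDef)
    (hrec : ∀ t, P (t + 1) = covUpdate W (P t) (z t)) (t : ℕ) : (P t).PosDef := by
  induction t with
  | zero => exact hP0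
  | succ t ih => rw [hrec]; exact ih.covUpdate hW

lemma half_log_det_sub_eq_sum_awgnCapacity (hW : 0 < W) (hP0 : (P 0).PosDef)
    (hrec : ∀ t, P (t + 1) = covUpdate W (P t) (z t)) (n : ℕ) :
    1 / 2 * Real.log (P 0).det - 1 / 2 * Real.log (P n).det =
      ∑ t ∈ Finset.range n, awgnCapacity W (z t ⬝ᵥ P t *ᵥ z t) := by
  induction n with
  | zero => simp
  | succ n ih =>
    rw [Finset.sum_range_succ, ← ih, hrec,
      log_det_covUpdate hW (posDef_of_covUpdate_rec hW hP0 hrec n), awgnCapacity]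
    ring

end Trajectory

theorem expected_information_gain_capacity_bound_general
    {Ω : Type*} [MeasurableSpace Ω] (ℙ : Measure Ω) [IsProbabilityMeasure ℙ]
    (Pm0 : Matrix (Fin 2) (Fin 2) ℝ) (hPm0 : Pm0.PosDef)
    (W : ℝ) (hW : 0 < W) (T : ℕ)
    (z : ℕ → Ω → Fin 2 → ℝ)
    (Pi : ℕ → Ω → Matrix (Fin 2) (Fin 2) ℝ)
    (hPi0 : ∀ ω, Pi 0 ω = Pm0)
    (hrec : ∀ t, ∀ ω, Pi (t + 1) ω = covUpdate W (Pi t ω) (z t ω))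
    (hint_pow : ∀ t < T, Integrable (fun ω => z t ω ⬝ᵥ (Pi t ω).mulVec (z t ω)) ℙ) :
    ∫ ω, ((1 / 2) * Real.log Pm0.det - (1 / 2) * Real.log (Pi T ω).det) ∂ℙ
      ≤ (T : ℝ) * ((1 / 2) * Real.log (1 + (1 / ((T : ℝ) * W)) *
          ∑ t ∈ Finset.range T, ∫ ω, z t ω ⬝ᵥ (Pi t ω).mulVec (z t ω) ∂ℙ)) := by
  set q : ℕ → Ω → ℝ := fun t ω => z t ω ⬝ᵥ (Pi t ω).mulVec (z t ω)
  have hP0 : ∀ ω, (Pi 0 ω).PosDef := fun ω => hPi0 ω ▸ hPm0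
  have hPD : ∀ t ω, (Pi t ω).PosDef := fun t ω =>
    posDef_of_covUpdate_rec (P := (Pi · ω)) hW (hP0 ω) (hrec · ω) t
  have hq0 : ∀ t, 0 ≤ᵐ[ℙ] q t := fun t => ae_of_all _ fun ω =>
    show 0 ≤ q t ω from (hPD t ω).dotProduct_mulVec_self_nonneg (z t ω)
  have hpath : ∀ ω, 1 / 2 * Real.log Pm0.det - 1 / 2 * Real.log (Pi T ω).det =
      ∑ t ∈ Finset.range T, awgnCapacity W (q t ω) := fun ω => by
    rw [← hPi0 ω]
    exact half_log_det_sub_eq_sum_awgnCapacity (P := (Pi · ω)) (z := (z · ω)) hW (hP0 ω)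
      (hrec · ω) T
  calc ∫ ω, (1 / 2 * Real.log Pm0.det - 1 / 2 * Real.log (Pi T ω).det) ∂ℙ
      = ∑ t ∈ Finset.range T, ∫ ω, awgnCapacity W (q t ω) ∂ℙ := by
        simp_rw [hpath]
        exact integral_finsetSum _ fun t ht =>
          (hint_pow t (Finset.mem_range.1 ht)).awgnCapacity_comp hW (hq0 t)
    _ ≤ ∑ t ∈ Finset.range T, awgnCapacity W (∫ ω, q t ω ∂ℙ) := Finset.sum_le_sum fun t ht =>
        integral_awgnCapacity_le hW (hint_pow t (Finset.mem_range.1 ht)) (hq0 t)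
    _ ≤ T * awgnCapacity W ((T : ℝ)⁻¹ * ∑ t ∈ Finset.range T, ∫ ω, q t ω ∂ℙ) := by
        simpa using (concaveOn_awgnCapacity hW).sum_le_card_mul_map_average (t := Finset.range T)
          fun t _ => (integral_nonneg_of_ae (hq0 t) : 0 ≤ ∫ ω, q t ω ∂ℙ)
    _ = _ := by
        rw [awgnCapacity, inv_mul_eq_div, div_div, one_div_mul_eq_div ((T : ℝ) * W)]

/-- Expectation form of Corollary 1:
E[(1/2)·log det Π₀ − (1/2)·log det Π_T]
  ≤ T·(1/2)·log(1 + (1/(TW))·Σ_{t<T} E[z_tᵀ Π_t z_t]). -/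
theorem expected_information_gain_capacity_bound
    {Ω : Type*} [MeasurableSpace Ω] (ℙ : Measure Ω) [IsProbabilityMeasure ℙ]
    (Pm0 : Matrix (Fin 2) (Fin 2) ℝ) (hPm0 : Pm0.PosDef)
    (W : ℝ) (hW : 0 < W) (T : ℕ) (hT : 1 ≤ T)
    (z : ℕ → Ω → Fin 2 → ℝ) (hzmeas : ∀ t, Measurable (z t))
    (Pi : ℕ → Ω → Matrix (Fin 2) (Fin 2) ℝ)
    (hPimeas : ∀ t, Measurable (Pi t))
    (hPi0 : ∀ ω, Pi 0 ω = Pm0)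
    (hrec : ∀ t, ∀ ω, Pi (t + 1) ω = covUpdate W (Pi t ω) (z t ω))
    (hint_pow : ∀ t < T, Integrable (fun ω => z t ω ⬝ᵥ (Pi t ω).mulVec (z t ω)) ℙ)
    (hint_log : Integrable (fun ω => Real.log (Pi T ω).det) ℙ) :
    ∫ ω, ((1 / 2) * Real.log Pm0.det - (1 / 2) * Real.log (Pi T ω).det) ∂ℙ
      ≤ (T : ℝ) * ((1 / 2) * Real.log (1 + (1 / ((T : ℝ) * W)) *
          ∑ t ∈ Finset.range T, ∫ ω, z t ω ⬝ᵥ (Pi t ω).mulVec (z t ω) ∂ℙ)) :=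
  expected_information_gain_capacity_bound_general ℙ Pm0 hPm0 W hW T z Pi hPi0 hrec hint_pow
end
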